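/- With f_Ryser : 2^{[n]} → ℝ defined by f_Ryser(τ) = (-1)^{|τ|} · Π_{i=1}^n Σ_{j∈τ} a_{ij}, the permanent satisfies perm(A) = (-1)^n · Σ_{τ ⊆ [n]} f_Ryser(τ). -/

import Mathlib

/-!
Expanding `∏ i, ∑ j ∈ τ, a i j` writes `f_Ryser(τ)` as `(-1)^|τ|` times the sum of `∏ i, a i (g i)`
over the maps `g` with image in `τ`. After exchanging the two sums, the coefficient of `g` is
`∑_{τ ⊇ im g} (-1)^|τ|`, which vanishes unless `g` is surjective, i.e. a permutation, and is then
`(-1)^n`.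
-/

/-- The permanent of an `n × n` matrix. -/
def perm {n : ℕ} {R : Type*} [CommRing R] (A : Matrix (Fin n) (Fin n) R) : R :=
  ∑ σ : Equiv.Perm (Fin n), ∏ i, A i (σ i)

/-- `f_Ryser(τ) = (-1)^{|τ|} · Π_{i} Σ_{j∈τ} a_{ij}`. -/
def fRyser {n : ℕ} (A : Matrix (Fin n) (Fin n) ℝ) (τ : Finset (Fin n)) : ℝ :=
  (-1 : ℝ) ^ τ.card * ∏ i, ∑ j ∈ τ, A i j

open Finset

section

variable {ι R : Type*} [Fintype ι] [DecidableEq ι] [CommRing R]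

theorem sum_superset_neg_one_pow_card (S : Finset ι) :
    ∑ τ with S ⊆ τ, (-1 : R) ^ #τ = if S = univ then (-1) ^ Fintype.card ι else 0 := by
  have shift : ∑ τ with S ⊆ τ, (-1 : R) ^ #τ = (-1) ^ #S * ∑ u ∈ Sᶜ.powerset, (-1) ^ #u := by
    rw [mul_sum]
    refine sum_nbij' (· \ S) (S ∪ ·) ?_ ?_ ?_ ?_ ?_
    · intro τ _
      simp [subset_compl_iff_disjoint_left, disjoint_sdiff]
    · intro u _
      simp
    · intro τ hτ
      exact union_sdiff_of_subset (mem_filter.mp hτ).2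
    · intro u hu
      exact union_sdiff_cancel_left (subset_compl_iff_disjoint_left.mp (mem_powerset.mp hu))
    · intro τ hτ
      rw [← pow_add, add_comm, card_sdiff_add_card_eq_card (mem_filter.mp hτ).2]
  have alternating := congrArg (Int.cast : ℤ → R) (sum_powerset_neg_one_pow_card (x := Sᶜ))
  push_cast at alternating
  simp only [shift, alternating, compl_eq_empty_iff]
  split_ifs with h <;> simp [h]

theorem prod_sum_eq_sum_image_subset (A : ι → ι → R) (τ : Finset ι) :
    ∏ i, ∑ j ∈ τ, A i j = ∑ g : ι → ι with univ.image g ⊆ τ, ∏ i, A i (g i) := by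
  rw [prod_univ_sum]
  congr 1
  ext g
  simp [Fintype.mem_piFinset, image_subset_iff]

theorem sum_surjective_eq_sum_perm {M : Type*} [AddCommMonoid M] (f : (ι → ι) → M) :
    ∑ g : ι → ι with g.Surjective, f g = ∑ σ : Equiv.Perm ι, f σ := by
  symm
  refine sum_bij (fun σ _ ↦ ⇑σ) (fun σ _ ↦ by simpa using σ.surjective)
    (fun σ _ τ _ h ↦ DFunLike.coe_injective h) (fun g hg ↦ ?_) (fun _ _ ↦ rfl)
  have hbij := Finite.surjective_iff_bijective.mp (mem_filter.mp hg).2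
  exact ⟨Equiv.ofBijective g hbij, mem_univ _, rfl⟩

theorem sum_neg_one_pow_card_mul_prod_sum (A : ι → ι → R) :
    ∑ τ : Finset ι, (-1) ^ #τ * ∏ i, ∑ j ∈ τ, A i j
      = (-1) ^ Fintype.card ι * ∑ σ : Equiv.Perm ι, ∏ i, A i (σ i) :=
  calc ∑ τ : Finset ι, (-1) ^ #τ * ∏ i, ∑ j ∈ τ, A i j
      = ∑ g : ι → ι, (∏ i, A i (g i)) * ∑ τ with univ.image g ⊆ τ, (-1 : R) ^ #τ := by
        simp only [prod_sum_eq_sum_image_subset, mul_sum, sum_filter]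
        rw [sum_comm]
        refine sum_congr rfl fun g _ ↦ sum_congr rfl fun τ _ ↦ ?_
        split_ifs <;> ring
    _ = ∑ g : ι → ι, (∏ i, A i (g i)) * if g.Surjective then (-1) ^ Fintype.card ι else 0 := by
        refine sum_congr rfl fun g _ ↦ ?_
        rw [sum_superset_neg_one_pow_card]
        congr 2
        simp [eq_univ_iff_forall, Function.Surjective]
    _ = (-1) ^ Fintype.card ι * ∑ σ : Equiv.Perm ι, ∏ i, A i (σ i) := by
        rw [mul_sum, ← sum_surjective_eq_sum_perm
          (fun g : ι → ι ↦ (-1 : R) ^ Fintype.card ι * ∏ i, A i (g i)), sum_filter]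
        refine sum_congr rfl fun g _ ↦ ?_
        split_ifs <;> ring

end

/-- The symbolic reformulation of Ryser's formula:
`perm A = (-1)^n · Σ_{τ ⊆ [n]} f_Ryser(τ)`. -/
theorem perm_eq_sum_fRyser {n : ℕ} (A : Matrix (Fin n) (Fin n) ℝ) :
    perm A = (-1 : ℝ) ^ n * ∑ τ : Finset (Fin n), fRyser A τ := by
  simp only [perm, fRyser]
  rw [sum_neg_one_pow_card_mul_prod_sum (R := ℝ) A, Fintype.card_fin, ← mul_assoc, ← pow_add,
    Even.neg_one_pow ⟨n, rfl⟩, one_mul]
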